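/- arXiv:1905.11453 — 2 statements merged into one kernel-verified Lean document; each statement's English description precedes it below -/
import Mathlib

section
/- Let g be a finite-dimensional Lie algebra and g* its dual, equipped with a Lie bracket [·,·]_{g*} coming from a Lie bialgebra structure δ_*. Then the bracket on d = g ⊕ g* defined by [u + ξ, w + η]_d = [u,w]_g + ad*_ξ w − ad*_η u + [ξ,η]_{g*} + ad*_u η − ad*_w ξ satisfies the Jacobi identity, i.e., d is a Lie algebra, where ad*_u ξ ∈ g* is defined by (ad*_u ξ)(w) = ξ([w,u]_g) and ad*_ξ u ∈ g by η(ad*_ξ u) = [η,ξ]_{g*}(u). -/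
/- STATEMENT 1: The Drinfeld double bracket on d = g ⊕ g* of a finite-dimensional
Lie bialgebra satisfies the Jacobi identity.
Here `B` is the Lie bracket [·,·]_{g*} on g* (bilinear, skew, Jacobi),
`adS u ξ = ad*_u ξ` is defined by (ad*_u ξ)(w) = ξ([w,u]),
`aS ξ u = ad*_ξ u` is defined by η(ad*_ξ u) = [η,ξ]_{g*}(u), and
`hcocycle` is the Lie bialgebra cocycle compatibility condition
δ_*([u,v]) = ad_u δ_*(v) − ad_v δ_*(u), written out in terms of B and ad*. -/
set_option maxHeartbeats 1000000 in
theorem stmt1 {L : Type*} [LieRing L] [LieAlgebra ℝ L] [FiniteDimensional ℝ L]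
    (B : Module.Dual ℝ L →ₗ[ℝ] Module.Dual ℝ L →ₗ[ℝ] Module.Dual ℝ L)
    (hBskew : ∀ ξ η, B ξ η = - B η ξ)
    (hBjac : ∀ ξ η ζ, B (B ξ η) ζ + B (B η ζ) ξ + B (B ζ ξ) η = 0)
    (adS : L → Module.Dual ℝ L →ₗ[ℝ] Module.Dual ℝ L)
    (hadS : ∀ (u : L) (ξ : Module.Dual ℝ L) (w : L), adS u ξ w = ξ ⁅w, u⁆)
    (aS : Module.Dual ℝ L → L → L)
    (haS : ∀ (ξ η : Module.Dual ℝ L) (u : L), η (aS ξ u) = B η ξ u)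
    (hcocycle : ∀ (u v : L) (ξ η : Module.Dual ℝ L),
      -(B ξ η ⁅u, v⁆) =
        B (adS u ξ) η v + B ξ (adS u η) v - B (adS v ξ) η u - B ξ (adS v η) u)
    (br : L × Module.Dual ℝ L → L × Module.Dual ℝ L → L × Module.Dual ℝ L)
    (hbr : ∀ a b, br a b =
      (⁅a.1, b.1⁆ + aS a.2 b.1 - aS b.2 a.1,
       B a.2 b.2 + adS a.1 b.2 - adS b.1 a.2)) :
    ∀ a b c, br (br a b) c + br (br b c) a + br (br c a) b = 0 := by
  have h1 : ∀ (α : Module.Dual ℝ L) (x y : L), α ⁅x, y⁆ = adS y α x :=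
    fun α x y => (hadS y α x).symm
  -- scalar skew lemmas
  have hsk : ∀ (α β : Module.Dual ℝ L) (x : L), B α β x = -(B β α x) := by
    intro α β x; rw [hBskew]; simp
  have hskin : ∀ (α β γ : Module.Dual ℝ L) (x : L), B (B α β) γ x = -(B (B β α) γ x) := by
    intro α β γ x; rw [hBskew α β]; simp
  -- scalar B-jacobi
  have hjac : ∀ (α β γ : Module.Dual ℝ L) (x : L),
      B (B α β) γ x + B (B β γ) α x + B (B γ α) β x = 0 := by
    intro α β γ x
    simpa using LinearMap.congr_fun (hBjac α β γ) x
  -- Lie jacobi helpers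
  have hLeib : ∀ (x a b : L), ⁅x, ⁅a, b⁆⁆ - ⁅⁅x, a⁆, b⁆ + ⁅⁅x, b⁆, a⁆ = 0 := by
    intro x a b
    have := leibniz_lie x a b
    rw [this]; abel_nf; rw [← lie_skew ⁅x, b⁆ a]; abel
  have hLJ : ∀ (x y z : L), ⁅⁅x, y⁆, z⁆ + ⁅⁅y, z⁆, x⁆ + ⁅⁅z, x⁆, y⁆ = (0 : L) := by
    intro x y z
    have h : ⁅⁅x,y⁆,z⁆ + ⁅⁅y,z⁆,x⁆ + ⁅⁅z,x⁆,y⁆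
        = -(⁅x,⁅y,z⁆⁆ + ⁅y,⁅z,x⁆⁆ + ⁅z,⁅x,y⁆⁆) := by
      rw [← lie_skew ⁅x,y⁆ z, ← lie_skew ⁅y,z⁆ x, ← lie_skew ⁅z,x⁆ y]; abel
    rw [h, lie_jacobi, neg_zero]
  -- scalar Lie jacobi through a functional
  have hθjac : ∀ (θ : Module.Dual ℝ L) (x y z : L),
      adS y (adS z θ) x + adS z (adS x θ) y + adS x (adS y θ) z = 0 := by
    intro θ x y z
    simp only [hadS]
    rw [← map_add, ← map_add, hLJ, map_zero]
  have hmix : ∀ (α : Module.Dual ℝ L) (a b x : L),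
      adS ⁅a, b⁆ α x - adS a (adS b α) x + adS b (adS a α) x = 0 := by
    intro α a b x
    simp only [hadS]
    rw [← map_sub, ← map_add, hLeib, map_zero]
  have hsw : ∀ (α β : Module.Dual ℝ L) (y x : L),
      adS (aS α y) β x = -(B (adS x β) α y) := by
    intro α β y x
    rw [hadS, ← lie_skew, map_neg, h1, haS]
  -- cocycle in normalized form (L-component)
  have hcoc : ∀ (u v : L) (θ ζ : Module.Dual ℝ L),
      -(adS v (B θ ζ) u) =
        B (adS u θ) ζ v + B θ (adS u ζ) v - B (adS v θ) ζ u - B θ (adS v ζ) u := by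
    intro u v θ ζ; rw [hadS]; exact hcocycle u v θ ζ
  rintro ⟨u, ξ⟩ ⟨v, η⟩ ⟨w, ζ⟩
  simp only [hbr, Prod.mk_add_mk, Prod.mk_eq_zero]
  constructor
  · rw [← Module.forall_dual_apply_eq_zero_iff ℝ]
    intro θ
    simp only [map_add, map_sub, LinearMap.add_apply, LinearMap.sub_apply, haS, h1]
    linear_combination (hθjac θ u v w) + hcoc u v θ ζ + hcoc v w θ ξ + hcoc w u θ η
      - hjac θ ξ η w + hsk θ (B ξ η) w + hskin η θ ξ w
      - hjac θ η ζ u + hsk θ (B η ζ) u + hskin ζ θ η u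
      - hjac θ ζ ξ v + hsk θ (B ζ ξ) v + hskin ξ θ ζ v
  · ext x
    simp only [LinearMap.add_apply, LinearMap.sub_apply, LinearMap.zero_apply, hadS]
    simp only [lie_add, lie_sub, map_add, map_sub, LinearMap.add_apply,
      LinearMap.sub_apply, haS, h1]
    linear_combination hjac ξ η ζ x + hmix ζ u v x + hmix ξ v w x + hmix η w u x
      + hcoc x w ξ η + hcoc x u η ζ + hcoc x v ζ ξ
      + hsw ξ ζ v x - hsw η ζ u x + hsw η ξ w x - hsw ζ ξ v x + hsw ζ η u x - hsw ξ η w x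
      + hsk ξ (adS x η) w + hsk η (adS x ζ) u + hsk ζ (adS x ξ) v
      - hsk ξ (adS w η) x - hsk η (adS u ζ) x - hsk ζ (adS v ξ) x
end

section
/- Let φ : (M₁, E₁) → (M₂, E₂) be a forward Dirac map between Dirac manifolds. Then for all x ∈ M₁, dφ maps Ker(E₁)|_x onto Ker(E₂)|_{φ(x)}, where Ker(E) := E ∩ TM. Moreover, φ is a strong Dirac map (i.e., Ker(dφ) ∩ Ker(E₁) = 0) if and only if dφ : Ker(E₁)|_x → Ker(E₂)|_{φ(x)} is a linear isomorphism for all x. -/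
/- STATEMENT 9 (pointwise linear-algebra formulation, applied at each point
x ∈ M₁): let φ (= dφ|_x) be a linear map and E₁, E₂ lagrangian subspaces of
V ⊕ V* (the fibers of the Dirac structures), with φ a forward Dirac map. Then
φ maps Ker(E₁) = {X : (X,0) ∈ E₁} onto Ker(E₂), and φ is strong
(Ker φ ∩ Ker E₁ = 0) iff φ restricts to a bijection Ker(E₁) → Ker(E₂). -/
theorem stmt9 {V₁ V₂ : Type*} [AddCommGroup V₁] [Module ℝ V₁]
    [AddCommGroup V₂] [Module ℝ V₂]
    (φ : V₁ →ₗ[ℝ] V₂)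
    (E₁ : Submodule ℝ (V₁ × Module.Dual ℝ V₁))
    (E₂ : Submodule ℝ (V₂ × Module.Dual ℝ V₂))
    (hiso₁ : ∀ p ∈ E₁, ∀ q ∈ E₁, (q.2 p.1 + p.2 q.1 : ℝ) = 0)
    (hmax₁ : ∀ p, (∀ q ∈ E₁, (q.2 p.1 + p.2 q.1 : ℝ) = 0) → p ∈ E₁)
    (hiso₂ : ∀ p ∈ E₂, ∀ q ∈ E₂, (q.2 p.1 + p.2 q.1 : ℝ) = 0)
    (hmax₂ : ∀ p, (∀ q ∈ E₂, (q.2 p.1 + p.2 q.1 : ℝ) = 0) → p ∈ E₂)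
    (hfwd : ∀ (Y : V₂) (β : Module.Dual ℝ V₂),
      (Y, β) ∈ E₂ ↔ ∃ X : V₁, Y = φ X ∧ (X, β.comp φ) ∈ E₁) :
    -- dφ maps Ker E₁ onto Ker E₂
    (φ '' {X : V₁ | (X, (0 : Module.Dual ℝ V₁)) ∈ E₁}
        = {Y : V₂ | (Y, (0 : Module.Dual ℝ V₂)) ∈ E₂}) ∧
    -- strong ↔ dφ : Ker E₁ → Ker E₂ is an isomorphism (bijective linear map)
    ((∀ X : V₁, (X, (0 : Module.Dual ℝ V₁)) ∈ E₁ → φ X = 0 → X = 0)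
      ↔ Set.BijOn φ {X : V₁ | (X, (0 : Module.Dual ℝ V₁)) ∈ E₁}
          {Y : V₂ | (Y, (0 : Module.Dual ℝ V₂)) ∈ E₂}) := by

  have hzero : ((0 : Module.Dual ℝ V₂)).comp φ = 0 := by ext x; simp
  have himg : φ '' {X : V₁ | (X, (0 : Module.Dual ℝ V₁)) ∈ E₁}
      = {Y : V₂ | (Y, (0 : Module.Dual ℝ V₂)) ∈ E₂} := by
    ext Y
    constructor
    · rintro ⟨X, hX, rfl⟩
      exact (hfwd (φ X) 0).mpr ⟨X, rfl, by rw [hzero]; exact hX⟩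
    · intro hY
      obtain ⟨X, rfl, hX⟩ := (hfwd Y 0).mp hY
      exact ⟨X, by rw [hzero] at hX; exact hX, rfl⟩
  refine ⟨himg, ?_, ?_⟩
  · intro hstrong
    refine ⟨fun X hX => himg ▸ Set.mem_image_of_mem φ hX, ?_, ?_⟩
    · intro X hX X' hX' h
      have hsub : (X - X', (0 : Module.Dual ℝ V₁)) ∈ E₁ := by
        have := E₁.sub_mem hX hX'
        simpa using this
      have : X - X' = 0 := hstrong _ hsub (by simp [h])
      exact sub_eq_zero.mp this
    · intro Y hY
      rw [← himg] at hY; exact hY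
  · intro hbij X hX hφX
    have h0 : (0 : V₁) ∈ {X : V₁ | (X, (0 : Module.Dual ℝ V₁)) ∈ E₁} := E₁.zero_mem
    exact hbij.injOn hX h0 (by simp [hφX])
end
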